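/- arXiv:2403.04108 — 3 statements merged into one kernel-verified Lean document; each statement's English description precedes it below -/
import Mathlib

section
/- Let X be a Markov chain on ℕ² started at (0,0), with two-step drift bound: there exists δ > 0 such that for all k ≥ 1 and all possible values of X_{2k−2}, the conditional expectation of (x_{2k} − y_{2k}) − (x_{2k−2} − y_{2k−2}) given X_{2k−2} is at least δ, and each two-step increment of x − y lies in {−2, 0, 2}. Then P(x_{2k} = y_{2k}) decays exponentially in k, and consequently ∑_{k≥1} P(X_{2k} = (0,0)) < ∞. -/
/-!
A Chernoff bound for the walk `d k = x_{2k} - y_{2k}`. On each event `{X_{2k} = s}` the value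
`d k` is constant, and an increment `z ∈ {-2, 0, 2}` satisfies
`exp (-t z) ≤ cosh 2t - (z / 2) sinh 2t` (the chord of a convex function), so the drift
hypothesis gives `E exp (-t d (k+1)) ≤ ρ E exp (-t d k)` with `ρ = cosh 2t - (δ / 2) sinh 2t`,
which is `< 1` for small `t > 0`. Hence `P (d k ≤ 0) ≤ E exp (-t d k) ≤ ρ ^ k`; this contains
`P (x_{2k} = y_{2k})` and, summed over `k`, the returns to the origin.
-/

open MeasureTheory Real

theorem Real.exp_neg_mul_le_cosh_sub_mul_sinh {z : ℤ} (hz : z ∈ ({-2, 0, 2} : Set ℤ)) (t : ℝ) :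
    exp (-t * z) ≤ cosh (2 * t) - z / 2 * sinh (2 * t) := by
  obtain rfl | rfl | rfl : z = -2 ∨ z = 0 ∨ z = 2 := by simpa using hz
  · rw [show -t * ((-2 : ℤ) : ℝ) = 2 * t by push_cast; ring, ← cosh_add_sinh]; norm_num
  · simp [one_le_cosh]
  · rw [show -t * ((2 : ℤ) : ℝ) = -(2 * t) by push_cast; ring, ← cosh_sub_sinh]; norm_num

theorem Real.exists_cosh_sub_mul_sinh_le_lt_one {δ : ℝ} (hδ : 0 < δ) :
    ∃ t > 0, ∃ ρ ∈ Set.Ioo (0 : ℝ) 1, cosh (2 * t) - δ / 2 * sinh (2 * t) ≤ ρ := by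
  -- with `sinh t = δ / 4`: `cosh 2t = 1 + δ² / 8` and `sinh 2t ≥ δ / 2`, so the rate is `≤ 1 - δ² / 8`
  refine ⟨arsinh (δ / 4), arsinh_pos_iff.2 (by positivity), max (1 - δ ^ 2 / 8) (1 / 2),
    ⟨by positivity, max_lt (by nlinarith) (by norm_num)⟩, le_max_of_le_left ?_⟩
  rw [cosh_two_mul, sinh_two_mul, cosh_sq, sinh_arsinh]
  nlinarith [one_le_cosh (arsinh (δ / 4))]

theorem abs_le_two_of_mem {z : ℤ} (hz : z ∈ ({-2, 0, 2} : Set ℤ)) : |z| ≤ 2 := by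
  obtain rfl | rfl | rfl : z = -2 ∨ z = 0 ∨ z = 2 := by simpa using hz
  all_goals norm_num

section

variable {Ω : Type*} [MeasurableSpace Ω] {μ : Measure Ω}
  {α : Type*} [MeasurableSpace α] [Countable α] [MeasurableSingletonClass α]

theorem ae_abs_le_two_mul_of_increments {D : ℕ → Ω → ℤ} (h0 : ∀ᵐ ω ∂μ, D 0 ω = 0)
    (hincr : ∀ k, ∀ᵐ ω ∂μ, D (k + 1) ω - D k ω ∈ ({-2, 0, 2} : Set ℤ)) (k : ℕ) :
    ∀ᵐ ω ∂μ, |D k ω| ≤ 2 * k := by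
  induction k with
  | zero => filter_upwards [h0] with ω h; simp [h]
  | succ k ih =>
    filter_upwards [ih, hincr k] with ω hk hstep
    have := abs_le_two_of_mem hstep
    calc |D (k + 1) ω| = |D k ω + (D (k + 1) ω - D k ω)| := by ring_nf
      _ ≤ |D k ω| + |D (k + 1) ω - D k ω| := abs_add_le _ _
      _ ≤ 2 * (k + 1 : ℕ) := by push_cast; linarith

theorem integrable_exp_neg_mul_of_ae_abs_le [IsFiniteMeasure μ] {D : Ω → ℤ} (hD : Measurable D)
    {t : ℝ} (ht : 0 ≤ t) {C : ℤ} (hC : ∀ᵐ ω ∂μ, |D ω| ≤ C) :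
    Integrable (fun ω => exp (-t * D ω)) μ := by
  refine .of_bound (by fun_prop) (exp (t * C)) ?_
  filter_upwards [hC] with ω h
  rw [norm_of_nonneg (exp_pos _).le, exp_le_exp]
  have : (-D ω : ℝ) ≤ C := by exact_mod_cast (neg_le_abs _).trans h
  nlinarith

theorem setIntegral_exp_neg_mul_le [IsFiniteMeasure μ] {W : Ω → ℤ} (hW : Measurable W)
    (hW_mem : ∀ᵐ ω ∂μ, W ω ∈ ({-2, 0, 2} : Set ℤ)) {A : Set Ω} {δ t : ℝ} (ht : 0 ≤ t)
    (hdrift : μ A ≠ 0 → δ * μ.real A ≤ ∫ ω in A, (W ω : ℝ) ∂μ) :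
    ∫ ω in A, exp (-t * W ω) ∂μ ≤ (cosh (2 * t) - δ / 2 * sinh (2 * t)) * μ.real A := by
  rcases eq_or_ne (μ A) 0 with hA | hA
  · simp [Measure.restrict_eq_zero.2 hA, measureReal_def, hA]
  have hW_int : Integrable (fun ω => (W ω : ℝ)) (μ.restrict A) := by
    refine .of_bound (by fun_prop) 2 (ae_restrict_of_ae ?_)
    filter_upwards [hW_mem] with ω h
    simpa [← Int.cast_abs] using (Int.cast_le (R := ℝ)).2 (abs_le_two_of_mem h)
  have hchord_int : Integrable (fun ω => cosh (2 * t) - W ω / 2 * sinh (2 * t)) (μ.restrict A) :=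
    (integrable_const _).sub ((hW_int.div_const 2).mul_const _)
  have hchord : ∀ᵐ ω ∂μ.restrict A, exp (-t * W ω) ≤ cosh (2 * t) - W ω / 2 * sinh (2 * t) :=
    ae_restrict_of_ae (hW_mem.mono fun ω h => exp_neg_mul_le_cosh_sub_mul_sinh h t)
  have hsinh : 0 ≤ sinh (2 * t) := sinh_nonneg_iff.2 (by positivity)
  calc ∫ ω in A, exp (-t * W ω) ∂μ
      ≤ ∫ ω in A, (cosh (2 * t) - W ω / 2 * sinh (2 * t)) ∂μ :=
        integral_mono_ae (hchord_int.mono' (by fun_prop)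
          (hchord.mono fun ω h => by rwa [norm_of_nonneg (exp_pos _).le])) hchord_int hchord
    _ = cosh (2 * t) * μ.real A - sinh (2 * t) / 2 * ∫ ω in A, (W ω : ℝ) ∂μ := by
        rw [integral_sub (integrable_const _) ((hW_int.div_const 2).mul_const _), setIntegral_const,
          smul_eq_mul, integral_mul_const, integral_div]
        ring
    _ ≤ cosh (2 * t) * μ.real A - sinh (2 * t) / 2 * (δ * μ.real A) := by
        gcongr; exact hdrift hA
    _ = _ := by ring

theorem hasSum_setIntegral_fiber {Z : Ω → α} (hZ : Measurable Z) {f : Ω → ℝ}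
    (hf : Integrable f μ) : HasSum (fun s => ∫ ω in {ω | Z ω = s}, f ω ∂μ) (∫ ω, f ω ∂μ) := by
  have hunion : (⋃ s, {ω | Z ω = s}) = Set.univ := Set.iUnion_eq_univ_iff.2 fun ω => ⟨Z ω, rfl⟩
  simpa [hunion] using hasSum_integral_iUnion (s := fun s => {ω | Z ω = s})
    (fun s => hZ (measurableSet_singleton s))
    (fun s s' h => Set.disjoint_left.2 fun ω h₁ h₂ => h (h₁.symm.trans h₂))
    (by rw [hunion]; exact hf.integrableOn)

theorem measureReal_nonpos_le_integral_exp_neg_mul [IsFiniteMeasure μ] {D : Ω → ℤ} {t : ℝ}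
    (ht : 0 ≤ t) (hint : Integrable (fun ω => exp (-t * D ω)) μ) :
    μ.real {ω | D ω ≤ 0} ≤ ∫ ω, exp (-t * D ω) ∂μ :=
  calc μ.real {ω | D ω ≤ 0} ≤ μ.real {ω | 1 ≤ exp (-t * D ω)} :=
        measureReal_mono fun ω (h : D ω ≤ 0) =>
          one_le_exp (mul_nonneg_of_nonpos_of_nonpos (neg_nonpos.2 ht) (by exact_mod_cast h))
    _ ≤ ∫ ω, exp (-t * D ω) ∂μ := by
        simpa using mul_meas_ge_le_integral_of_nonneg (ae_of_all _ fun ω => (exp_pos _).le) hint 1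

theorem integral_exp_neg_mul_le_mul_of_drift [IsFiniteMeasure μ] {Z : Ω → α} (hZ : Measurable Z)
    {φ : α → ℤ} {D₀ D₁ : Ω → ℤ} (hD₀ : D₀ = φ ∘ Z) (hD₁ : Measurable D₁)
    (hstep : ∀ᵐ ω ∂μ, D₁ ω - D₀ ω ∈ ({-2, 0, 2} : Set ℤ)) {δ t ρ : ℝ} (ht : 0 ≤ t)
    (hρ : cosh (2 * t) - δ / 2 * sinh (2 * t) ≤ ρ)
    (hdrift : ∀ s, μ {ω | Z ω = s} ≠ 0 →
      δ * μ.real {ω | Z ω = s} ≤ ∫ ω in {ω | Z ω = s}, ((D₁ ω - D₀ ω : ℤ) : ℝ) ∂μ)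
    (hint₀ : Integrable (fun ω => exp (-t * D₀ ω)) μ)
    (hint₁ : Integrable (fun ω => exp (-t * D₁ ω)) μ) :
    ∫ ω, exp (-t * D₁ ω) ∂μ ≤ ρ * ∫ ω, exp (-t * D₀ ω) ∂μ := by
  have hD₀m : Measurable D₀ := hD₀ ▸ (measurable_of_countable φ).comp hZ
  have hfiber : ∀ s, ∫ ω in {ω | Z ω = s}, exp (-t * D₁ ω) ∂μ ≤
      ρ * ∫ ω in {ω | Z ω = s}, exp (-t * D₀ ω) ∂μ := by
    intro s
    have hmeas : MeasurableSet {ω | Z ω = s} := hZ (measurableSet_singleton s)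
    -- on the fiber `D₀` is the constant `φ s`, so `exp (-t D₀)` factors out
    have hsplit : ∀ ω ∈ {ω | Z ω = s},
        exp (-t * D₁ ω) = exp (-t * φ s) * exp (-t * ((D₁ ω - D₀ ω : ℤ) : ℝ)) := by
      intro ω hω
      rw [← exp_add, hD₀, Function.comp_apply, hω]; push_cast; ring_nf
    have hconst : ∀ ω ∈ {ω | Z ω = s}, exp (-t * D₀ ω) = exp (-t * φ s) := by
      intro ω hω; rw [hD₀, Function.comp_apply, hω]
    rw [setIntegral_congr_fun hmeas hsplit, setIntegral_congr_fun hmeas hconst, integral_const_mul,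
      setIntegral_const, smul_eq_mul]
    calc exp (-t * φ s) * ∫ ω in {ω | Z ω = s}, exp (-t * ((D₁ ω - D₀ ω : ℤ) : ℝ)) ∂μ
        ≤ exp (-t * φ s) * ((cosh (2 * t) - δ / 2 * sinh (2 * t)) * μ.real {ω | Z ω = s}) := by
          gcongr
          exact setIntegral_exp_neg_mul_le (hD₁.sub hD₀m) hstep ht (hdrift s)
      _ ≤ exp (-t * φ s) * (ρ * μ.real {ω | Z ω = s}) := by gcongr
      _ = ρ * (μ.real {ω | Z ω = s} * exp (-t * φ s)) := by ring
  exact hasSum_le hfiber (hasSum_setIntegral_fiber hZ hint₁)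
    ((hasSum_setIntegral_fiber hZ hint₀).mul_left ρ)

theorem measureReal_nonpos_le_pow_of_drift [IsProbabilityMeasure μ] {Z : ℕ → Ω → α}
    (hZ : ∀ k, Measurable (Z k)) {φ : α → ℤ} {D : ℕ → Ω → ℤ} (hD : ∀ k, D k = φ ∘ Z k)
    (h0 : ∀ᵐ ω ∂μ, D 0 ω = 0)
    (hincr : ∀ k, ∀ᵐ ω ∂μ, D (k + 1) ω - D k ω ∈ ({-2, 0, 2} : Set ℤ)) {δ t ρ : ℝ} (ht : 0 ≤ t)
    (hρ₀ : 0 ≤ ρ) (hρ : cosh (2 * t) - δ / 2 * sinh (2 * t) ≤ ρ)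
    (hdrift : ∀ k s, μ {ω | Z k ω = s} ≠ 0 →
      δ * μ.real {ω | Z k ω = s} ≤ ∫ ω in {ω | Z k ω = s}, ((D (k + 1) ω - D k ω : ℤ) : ℝ) ∂μ)
    (k : ℕ) : μ.real {ω | D k ω ≤ 0} ≤ ρ ^ k := by
  have hDm : ∀ k, Measurable (D k) := fun k => hD k ▸ (measurable_of_countable φ).comp (hZ k)
  have hint : ∀ k, Integrable (fun ω => exp (-t * D k ω)) μ := fun k =>
    integrable_exp_neg_mul_of_ae_abs_le (hDm k) ht (ae_abs_le_two_mul_of_increments h0 hincr k)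
  have hmgf : ∀ k, ∫ ω, exp (-t * D k ω) ∂μ ≤ ρ ^ k := by
    intro k
    induction k with
    | zero =>
      have hone : (fun ω => exp (-t * D 0 ω)) =ᵐ[μ] fun _ => 1 := h0.mono fun ω h => by simp [h]
      rw [integral_congr_ae hone]
      simp
    | succ k ih =>
      calc ∫ ω, exp (-t * D (k + 1) ω) ∂μ ≤ ρ * ∫ ω, exp (-t * D k ω) ∂μ :=
            integral_exp_neg_mul_le_mul_of_drift (hZ k) (hD k) (hDm (k + 1)) (hincr k) ht hρ
              (hdrift k) (hint k) (hint (k + 1))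
        _ ≤ ρ * ρ ^ k := by gcongr
        _ = ρ ^ (k + 1) := by ring
  exact (measureReal_nonpos_le_integral_exp_neg_mul ht (hint k)).trans (hmgf k)

end

theorem exp_decay_and_transient_of_two_step_drift_general
    {Ω : Type*} [MeasurableSpace Ω] (μ : Measure Ω) [IsProbabilityMeasure μ]
    (X : ℕ → Ω → ℕ × ℕ) (hXmeas : ∀ n, Measurable (X n))
    (hstart : ∀ᵐ ω ∂μ, X 0 ω = (0, 0))
    (d : ℕ → Ω → ℤ)
    (hd : ∀ k ω, d k ω = ((X (2 * k) ω).1 : ℤ) - ((X (2 * k) ω).2 : ℤ))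
    (hincr : ∀ k : ℕ, ∀ᵐ ω ∂μ, d (k + 1) ω - d k ω ∈ ({-2, 0, 2} : Set ℤ))
    (δ : ℝ) (hδ : 0 < δ)
    (hdrift : ∀ (k : ℕ) (s : ℕ × ℕ), μ {ω | X (2 * k) ω = s} ≠ 0 →
      δ * (μ {ω | X (2 * k) ω = s}).toReal ≤
        ∫ ω in {ω | X (2 * k) ω = s}, ((d (k + 1) ω - d k ω : ℤ) : ℝ) ∂μ) :
    (∃ C > (0 : ℝ), ∃ c > (0 : ℝ), ∀ k : ℕ,
        (μ {ω | (X (2 * k) ω).1 = (X (2 * k) ω).2}).toReal ≤ C * Real.exp (-c * k)) ∧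
      ∑' k : ℕ, μ {ω | X (2 * (k + 1)) ω = (0, 0)} < ⊤ := by
  obtain ⟨t, ht, ρ, ⟨hρ₀, hρ₁⟩, hρ⟩ := exists_cosh_sub_mul_sinh_le_lt_one hδ
  have h0 : ∀ᵐ ω ∂μ, d 0 ω = 0 := hstart.mono fun ω h => by simp [hd, h]
  have hdiag : ∀ k, μ.real {ω | (X (2 * k) ω).1 = (X (2 * k) ω).2} ≤ ρ ^ k := fun k =>
    (measureReal_mono fun ω (h : (X (2 * k) ω).1 = _) => show d k ω ≤ 0 by simp [hd, h]).trans
      (measureReal_nonpos_le_pow_of_drift (Z := fun k => X (2 * k))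
        (φ := fun p => (p.1 : ℤ) - p.2) (fun k => hXmeas _)
        (fun k => funext (hd k)) h0 hincr ht.le hρ₀.le hρ hdrift k)
  refine ⟨⟨1, one_pos, -log ρ, neg_pos.2 (log_neg hρ₀ hρ₁), fun k => ?_⟩, ?_⟩
  · rw [one_mul, neg_neg, mul_comm (log ρ), exp_nat_mul, exp_log hρ₀]
    exact hdiag k
  · have horigin : ∀ k, μ {ω | X (2 * (k + 1)) ω = (0, 0)} ≤ ENNReal.ofReal (ρ ^ (k + 1)) :=
      fun k => calc
        μ {ω | X (2 * (k + 1)) ω = (0, 0)}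
            ≤ μ {ω | (X (2 * (k + 1)) ω).1 = (X (2 * (k + 1)) ω).2} :=
          measure_mono fun ω (h : X _ ω = (0, 0)) => show _ = _ by simp [h]
        _ = ENNReal.ofReal (μ.real {ω | (X (2 * (k + 1)) ω).1 = (X (2 * (k + 1)) ω).2}) :=
          (ofReal_measureReal (measure_ne_top _ _)).symm
        _ ≤ ENNReal.ofReal (ρ ^ (k + 1)) := ENNReal.ofReal_le_ofReal (hdiag (k + 1))
    calc ∑' k, μ {ω | X (2 * (k + 1)) ω = (0, 0)} ≤ ∑' k, ENNReal.ofReal (ρ ^ (k + 1)) :=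
          ENNReal.tsum_le_tsum horigin
      _ = ENNReal.ofReal (∑' k, ρ ^ (k + 1)) := (ENNReal.ofReal_tsum_of_nonneg
          (fun k => by positivity) ((summable_nat_add_iff 1).2
            (summable_geometric_of_lt_one hρ₀.le hρ₁))).symm
      _ < ⊤ := ENNReal.ofReal_lt_top

/-- Let `X` be a Markov chain on `ℕ²` started at `(0,0)` whose two-step increments of
`x − y` lie in `{−2, 0, 2}` and satisfy a uniform conditional drift bound
`E[(x_{2k} − y_{2k}) − (x_{2k−2} − y_{2k−2}) ∣ X_{2k−2} = s] ≥ δ > 0` for every possible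
value `s` of `X_{2k−2}`. Then `P(x_{2k} = y_{2k})` decays exponentially in `k`, and
consequently `∑_{k≥1} P(X_{2k} = (0,0)) < ∞`. -/
theorem exp_decay_and_transient_of_two_step_drift
    {Ω : Type*} [MeasurableSpace Ω] (μ : Measure Ω) [IsProbabilityMeasure μ]
    (X : ℕ → Ω → ℕ × ℕ) (hXmeas : ∀ n, Measurable (X n))
    (hstart : ∀ᵐ ω ∂μ, X 0 ω = (0, 0))
    (K : ℕ × ℕ → ℕ × ℕ → ENNReal) (hrow : ∀ s, ∑' t, K s t = 1)
    (hMarkov : ∀ (n : ℕ) (f : ℕ → ℕ × ℕ) (t : ℕ × ℕ),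
      μ ({ω | X (n + 1) ω = t} ∩ ⋂ i ∈ Finset.range (n + 1), {ω | X i ω = f i})
        = K (f n) t * μ (⋂ i ∈ Finset.range (n + 1), {ω | X i ω = f i}))
    (d : ℕ → Ω → ℤ)
    (hd : ∀ k ω, d k ω = ((X (2 * k) ω).1 : ℤ) - ((X (2 * k) ω).2 : ℤ))
    (hincr : ∀ k : ℕ, ∀ᵐ ω ∂μ, d (k + 1) ω - d k ω ∈ ({-2, 0, 2} : Set ℤ))
    (δ : ℝ) (hδ : 0 < δ)
    (hdrift : ∀ (k : ℕ) (s : ℕ × ℕ), μ {ω | X (2 * k) ω = s} ≠ 0 →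
      δ * (μ {ω | X (2 * k) ω = s}).toReal ≤
        ∫ ω in {ω | X (2 * k) ω = s}, ((d (k + 1) ω - d k ω : ℤ) : ℝ) ∂μ) :
    (∃ C > (0 : ℝ), ∃ c > (0 : ℝ), ∀ k : ℕ,
        (μ {ω | (X (2 * k) ω).1 = (X (2 * k) ω).2}).toReal ≤ C * Real.exp (-c * k)) ∧
      ∑' k : ℕ, μ {ω | X (2 * (k + 1)) ω = (0, 0)} < ⊤ :=
  exp_decay_and_transient_of_two_step_drift_general μ X hXmeas hstart d hd hincr δ hδ hdrift
end

section
/- Let S = {s₁,…,s_m} ⊆ ℤⁿ be symmetric (closed under negation), let A be the probability simplex on m coordinates, and let R = {a ∈ A : dim(span_ℝ({sᵢ : aᵢ > 0})) ≤ 2 and ∑ᵢ aᵢ sᵢ = 0}. If R is nonempty, then R is path-connected. -/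
/-!
For a fixed subspace `p` of dimension at most `d`, the zero-drift probability vectors supported on
indices `i` with `vᵢ ∈ p` form a convex subset of the recurrent set, so any two of its points are
joined by a segment. Every recurrent `a` lies in such a set for `p = span {vᵢ : aᵢ > 0}`, together
with the symmetric two-point measure on `{vᵢ, -vᵢ}` for any `i` with `aᵢ > 0`; and two such
two-point measures lie in a common such set, for `p` the span of two vectors.
-/

open Module Submodule

section

variable {ι E : Type*} [Fintype ι] [AddCommGroup E] [Module ℝ E]

def recurrentSet (v : ι → E) (d : ℕ) : Set (ι → ℝ) :=
  {a | a ∈ stdSimplex ℝ ι ∧ finrank ℝ (span ℝ (v '' {i | 0 < a i})) ≤ d ∧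
    ∑ i, a i • v i = 0}

def recurrentSetIn (v : ι → E) (p : Submodule ℝ E) : Set (ι → ℝ) :=
  {a | a ∈ stdSimplex ℝ ι ∧ (∀ i, v i ∉ p → a i = 0) ∧ ∑ i, a i • v i = 0}

variable {v : ι → E}

theorem convex_recurrentSetIn (p : Submodule ℝ E) : Convex ℝ (recurrentSetIn v p) := by
  have hsupp : Convex ℝ {a : ι → ℝ | ∀ i, v i ∉ p → a i = 0} := by
    intro a ha b hb s t _ _ _ i hi
    simp [ha i hi, hb i hi]
  have hdrift : Convex ℝ {a : ι → ℝ | ∑ i, a i • v i = 0} :=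
    (LinearMap.ker (Fintype.linearCombination ℝ v)).convex
  exact (convex_stdSimplex ℝ ι).inter (hsupp.inter hdrift)

theorem recurrentSetIn_subset_recurrentSet {p : Submodule ℝ E} [Module.Finite ℝ p] {d : ℕ}
    (hp : finrank ℝ p ≤ d) : recurrentSetIn v p ⊆ recurrentSet v d := by
  rintro a ⟨ha, hsupp, hdrift⟩
  refine ⟨ha, le_trans (finrank_mono (span_le.2 ?_)) hp, hdrift⟩
  rintro _ ⟨i, hi, rfl⟩
  by_contra h
  exact (hsupp i h ▸ hi : (0 : ℝ) < 0).false

theorem JoinedIn.of_mem_recurrentSetIn {p : Submodule ℝ E} [Module.Finite ℝ p] {d : ℕ}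
    (hp : finrank ℝ p ≤ d) {a b : ι → ℝ} (ha : a ∈ recurrentSetIn v p)
    (hb : b ∈ recurrentSetIn v p) : JoinedIn (recurrentSet v d) a b :=
  (JoinedIn.of_segment_subset ((convex_recurrentSetIn p).segment_subset ha hb)).mono
    (recurrentSetIn_subset_recurrentSet hp)

theorem mem_recurrentSetIn_span_support {d : ℕ} {a : ι → ℝ} (ha : a ∈ recurrentSet v d) :
    a ∈ recurrentSetIn v (span ℝ (v '' {i | 0 < a i})) := by
  refine ⟨ha.1, fun i hi => ?_, ha.2.2⟩
  by_contra h
  exact hi (subset_span ⟨i, lt_of_le_of_ne (ha.1.1 i) (Ne.symm h), rfl⟩)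

theorem midpoint_single_mem_recurrentSetIn [DecidableEq ι] {p : Submodule ℝ E} {i j : ι}
    (hji : v j = -v i) (hi : v i ∈ p) :
    midpoint ℝ (Pi.single i 1 : ι → ℝ) (Pi.single j 1) ∈ recurrentSetIn v p := by
  refine ⟨(convex_stdSimplex ℝ ι).midpoint_mem (single_mem_stdSimplex ℝ i)
    (single_mem_stdSimplex ℝ j), fun k hk => ?_, ?_⟩
  · have hki : k ≠ i := by rintro rfl; exact hk hi
    have hkj : k ≠ j := by rintro rfl; exact hk (hji ▸ p.neg_mem hi)
    simp [hki, hkj]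
  · change Fintype.linearCombination ℝ v _ = 0
    simp [midpoint_eq_smul_add, hji]

theorem exists_pos_of_mem_stdSimplex {a : ι → ℝ} (ha : a ∈ stdSimplex ℝ ι) : ∃ i, 0 < a i := by
  by_contra! h
  have : ∑ i, a i = 0 := Finset.sum_eq_zero fun i _ => le_antisymm (h i) (ha.1 i)
  exact zero_ne_one (this.symm.trans ha.2)

theorem finrank_span_pair_le (x y : E) : finrank ℝ (span ℝ ({x, y} : Set E)) ≤ 2 := by
  classical
  have := finrank_span_finset_le_card (R := ℝ) ({x, y} : Finset E)
  rw [Finset.coe_pair] at this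
  exact this.trans Finset.card_le_two

theorem exists_joinedIn_midpoint_single [DecidableEq ι] (hsymm : ∀ i, ∃ j, v j = -v i) {d : ℕ}
    {a : ι → ℝ} (ha : a ∈ recurrentSet v d) : ∃ i j, v j = -v i ∧
      JoinedIn (recurrentSet v d) a (midpoint ℝ (Pi.single i 1 : ι → ℝ) (Pi.single j 1)) := by
  obtain ⟨i, hi⟩ := exists_pos_of_mem_stdSimplex ha.1
  obtain ⟨j, hji⟩ := hsymm i
  have : Module.Finite ℝ (span ℝ (v '' {i | 0 < a i})) :=
    Module.Finite.span_of_finite ℝ (Set.toFinite _)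
  exact ⟨i, j, hji, .of_mem_recurrentSetIn ha.2.1 (mem_recurrentSetIn_span_support ha)
    (midpoint_single_mem_recurrentSetIn hji (subset_span ⟨i, hi, rfl⟩))⟩

theorem isPathConnected_recurrentSet (hsymm : ∀ i, ∃ j, v j = -v i) {d : ℕ} (hd : 2 ≤ d)
    (hne : (recurrentSet v d).Nonempty) : IsPathConnected (recurrentSet v d) := by
  classical
  obtain ⟨a₀, ha₀⟩ := hne
  refine ⟨a₀, ha₀, fun b hb => ?_⟩
  obtain ⟨i, j, hji, ha₀ij⟩ := exists_joinedIn_midpoint_single hsymm ha₀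
  obtain ⟨k, l, hlk, hbkl⟩ := exists_joinedIn_midpoint_single hsymm hb
  have : Module.Finite ℝ (span ℝ {v i, v k}) := Module.Finite.span_of_finite ℝ (Set.toFinite _)
  have hijkl := JoinedIn.of_mem_recurrentSetIn ((finrank_span_pair_le (v i) (v k)).trans hd)
    (midpoint_single_mem_recurrentSetIn hji (subset_span (Set.mem_insert _ _)))
    (midpoint_single_mem_recurrentSetIn hlk (subset_span (Set.mem_insert_of_mem _ rfl)))
  exact (ha₀ij.trans hijkl).trans hbkl.symm

end

/-- Let `S = {s₁, …, s_m} ⊆ ℤⁿ` be symmetric (closed under negation), `A` the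
probability simplex on `m` coordinates, and
`R = {a ∈ A : dim span_ℝ({sᵢ : aᵢ > 0}) ≤ 2 and ∑ aᵢ sᵢ = 0}`. If `R` is nonempty,
then `R` is path-connected. -/
theorem recurrentSet_isPathConnected (n m : ℕ) (s : Fin m → Fin n → ℤ)
    (hsymm : ∀ i : Fin m, ∃ j : Fin m, s j = -s i) :
    ({a : Fin m → ℝ |
      ((∀ i, 0 ≤ a i) ∧ ∑ i, a i = 1) ∧
      Module.finrank ℝ
        ↥(Submodule.span ℝ ((fun i => fun j => (s i j : ℝ)) '' {i | 0 < a i})) ≤ 2 ∧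
      (∑ i, a i • (fun j => (s i j : ℝ))) = 0} : Set (Fin m → ℝ)).Nonempty →
    IsPathConnected {a : Fin m → ℝ |
      ((∀ i, 0 ≤ a i) ∧ ∑ i, a i = 1) ∧
      Module.finrank ℝ
        ↥(Submodule.span ℝ ((fun i => fun j => (s i j : ℝ)) '' {i | 0 < a i})) ≤ 2 ∧
      (∑ i, a i • (fun j => (s i j : ℝ))) = 0} :=
  isPathConnected_recurrentSet (v := fun i j => (s i j : ℝ))
    (fun i => (hsymm i).imp fun j hj => by ext; simp [hj]) le_rfl
end

section
/- Let G = ℤⁿ × H with H a finite abelian group, π: G → ℤⁿ the projection, and X a homogeneous random walk on G with step distribution supported on a finite set S, started at 0. If the projected walk π(X) on ℤⁿ returns to 0 infinitely often almost surely, and there exist K ∈ ℕ and δ > 0 such that whenever π(X_t) = 0, the conditional probability that X_{t+k} = 0 for some 0 ≤ k ≤ K is at least δ, then X returns to 0 infinitely often almost surely. -/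
open MeasureTheory ProbabilityTheory

/-!
Pick times at which the projection of the walk vanishes greedily from time `m` on, each more than
`K` after the previous one. At a pick `s` with `X_s = g`, returning to `0` within `K` steps is the
event that the increments after `s` reach `-g`, which is independent of the past and, by the
hypothesis, has probability `≥ δ`. The next pick comes after that window, so avoiding `0` from `m`
on through `j` picks has probability `≤ (1 - δ)^j`. Almost surely there are infinitely many picks,
hence almost surely the walk returns to `0` after every time `m`.
-/

/-- `IsSparseHit s K m j t`: `t` is the `j`-th element of `s` picked greedily from `m` on,
each pick more than `K` after the previous one. -/
def IsSparseHit (s : Set ℕ) (K m : ℕ) : ℕ → ℕ → Prop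
  | 0, t => IsLeast {u ∈ s | m ≤ u} t
  | j + 1, t => ∃ r, IsSparseHit s K m j r ∧ IsLeast {u ∈ s | r + K + 1 ≤ u} t

theorem isLeast_sep_le_congr {s s' : Set ℕ} {a t : ℕ} (hss' : ∀ u ≤ t, u ∈ s ↔ u ∈ s')
    (ht : IsLeast {u ∈ s | a ≤ u} t) : IsLeast {u ∈ s' | a ≤ u} t := by
  refine ⟨⟨(hss' t le_rfl).1 ht.1.1, ht.1.2⟩, fun u hu => ?_⟩
  by_contra! hut
  exact absurd (ht.2 ⟨(hss' u hut.le).2 hu.1, hu.2⟩) (not_le.2 hut)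

namespace IsSparseHit

variable {s s' : Set ℕ} {K m j t t' : ℕ}

theorem mem_and_le (h : IsSparseHit s K m j t) : t ∈ s ∧ m ≤ t := by
  induction j generalizing t with
  | zero => exact h.1
  | succ j ih =>
    obtain ⟨r, hr, ⟨hts, hrt⟩, -⟩ := h
    exact ⟨hts, by have := (ih hr).2; omega⟩

theorem unique (h : IsSparseHit s K m j t) (h' : IsSparseHit s K m j t') : t = t' := by
  induction j generalizing t t' with
  | zero => exact h.unique h'
  | succ j ih =>
    obtain ⟨r, hr, ht⟩ := h
    obtain ⟨r', hr', ht'⟩ := h'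
    obtain rfl := ih hr hr'
    exact ht.unique ht'

theorem exists_of_infinite (hs : s.Infinite) (j : ℕ) : ∃ t, IsSparseHit s K m j t := by
  have least (a : ℕ) : ∃ t, IsLeast {u ∈ s | a ≤ u} t :=
    ⟨_, Nat.sInf_mem ((hs.exists_gt a).imp fun _ h => ⟨h.1, h.2.le⟩), fun _ hu => Nat.sInf_le hu⟩
  induction j with
  | zero => exact least m
  | succ j ih =>
    obtain ⟨r, hr⟩ := ih
    exact (least (r + K + 1)).imp fun _ ht => ⟨r, hr, ht⟩

theorem congr (hss' : ∀ u ≤ t, u ∈ s ↔ u ∈ s') (h : IsSparseHit s K m j t) :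
    IsSparseHit s' K m j t := by
  induction j generalizing t with
  | zero => exact isLeast_sep_le_congr hss' h
  | succ j ih =>
    obtain ⟨r, hr, ht⟩ := h
    exact ⟨r, ih (fun u hu => hss' u (by have := ht.1.2; omega)) hr, isLeast_sep_le_congr hss' ht⟩

end IsSparseHit

section DependsOnlyOn

variable {Ω G : Type*}

def DependsOnlyOn (ξ : ℕ → Ω → G) (I : Finset ℕ) (B : Set Ω) : Prop :=
  ∀ ω ω', (∀ i ∈ I, ξ i ω = ξ i ω') → ω ∈ B → ω' ∈ B

variable {ξ : ℕ → Ω → G} {I J : Finset ℕ} {B C W : Set Ω}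

theorem DependsOnlyOn.inter (hB : DependsOnlyOn ξ I B) (hC : DependsOnlyOn ξ I C) :
    DependsOnlyOn ξ I (B ∩ C) :=
  fun ω ω' h hω => ⟨hB ω ω' h hω.1, hC ω ω' h hω.2⟩

theorem DependsOnlyOn.preimage_image (h : DependsOnlyOn ξ I B) :
    (fun ω (i : I) => ξ i ω) ⁻¹' ((fun ω (i : I) => ξ i ω) '' B) = B := by
  refine Set.Subset.antisymm ?_ (Set.subset_preimage_image _ _)
  rintro ω ⟨ω', hω', heq⟩
  exact h ω' ω (fun i hi => congrFun heq ⟨i, hi⟩) hω'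

variable [MeasurableSpace Ω] [MeasurableSpace G] [Countable G] [MeasurableSingletonClass G]
  {μ : Measure Ω}

theorem DependsOnlyOn.measurableSet (hξ : ∀ i, Measurable (ξ i)) (h : DependsOnlyOn ξ I B) :
    MeasurableSet B := by
  rw [← h.preimage_image]
  exact (Set.to_countable _).measurableSet.preimage (measurable_pi_lambda _ fun i => hξ i)

theorem DependsOnlyOn.measure_inter (hindep : iIndepFun ξ μ) (hξ : ∀ i, Measurable (ξ i))
    (hIJ : Disjoint I J) (hB : DependsOnlyOn ξ I B) (hW : DependsOnlyOn ξ J W) :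
    μ (B ∩ W) = μ B * μ W := by
  rw [← hB.preimage_image, ← hW.preimage_image]
  exact (hindep.indepFun_finset I J hIJ hξ).measure_inter_preimage_eq_mul _ _
    (Set.to_countable _).measurableSet (Set.to_countable _).measurableSet

theorem DependsOnlyOn.measure_diff_le (hindep : iIndepFun ξ μ) (hξ : ∀ i, Measurable (ξ i))
    (hIJ : Disjoint I J) (hB : DependsOnlyOn ξ I B) (hC : DependsOnlyOn ξ I C)
    (hW : DependsOnlyOn ξ J W) (hBC : B ⊆ C) {δ : ENNReal} (hδ : δ * μ C ≤ μ (C ∩ W)) :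
    μ (B \ W) ≤ (1 - δ) * μ B := by
  have := hindep.isProbabilityMeasure
  rcases eq_or_ne (μ C) 0 with hC0 | hC0
  · have hB0 : μ B = 0 := measure_mono_null hBC hC0
    simp [measure_mono_null Set.sdiff_subset hB0, hB0]
  have hδW : δ ≤ μ W := by
    rw [hC.measure_inter hindep hξ hIJ hW, mul_comm (μ C)] at hδ
    exact (ENNReal.mul_le_mul_iff_left hC0 (measure_ne_top μ C)).1 hδ
  calc μ (B \ W) = μ B - μ B * μ W := by
        rw [← Set.sdiff_self_inter, measure_sdiff Set.inter_subset_left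
          ((hB.measurableSet hξ).inter (hW.measurableSet hξ)).nullMeasurableSet
          (measure_ne_top μ _), hB.measure_inter hindep hξ hIJ hW]
    _ ≤ μ B - μ B * δ := tsub_le_tsub_left (mul_le_mul_right hδW _) _
    _ = (1 - δ) * μ B := by
        rw [ENNReal.sub_mul fun _ _ => measure_ne_top μ B, one_mul, mul_comm]

end DependsOnlyOn

section Walk

variable {Ω G : Type*} [AddCommGroup G] {ξ : ℕ → Ω → G}

def walk (ξ : ℕ → Ω → G) (k : ℕ) (ω : Ω) : G := ∑ i ∈ Finset.range k, ξ i ω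

def returnsWithin (ξ : ℕ → Ω → G) (K s : ℕ) : Set Ω := {ω | ∃ k ≤ K, walk ξ (s + k) ω = 0}

def hitAvoidingZero (ξ : ℕ → Ω → G) (p : G → Prop) (K m j t : ℕ) : Set Ω :=
  {ω | IsSparseHit {u | p (walk ξ u ω)} K m j t ∧ ∀ u, m ≤ u → u ≤ t → walk ξ u ω ≠ 0}

/-- The walk restarted at time `s` from `g` reaches `0` within `K` steps; unlike `returnsWithin`,
this event is independent of the first `s` steps. -/
def returnsFrom (ξ : ℕ → Ω → G) (K s : ℕ) (g : G) : Set Ω :=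
  {ω | ∃ k ≤ K, g + ∑ i ∈ Finset.Ico s (s + k), ξ i ω = 0}

theorem walk_add (ξ : ℕ → Ω → G) (s k : ℕ) (ω : Ω) :
    walk ξ (s + k) ω = walk ξ s ω + ∑ i ∈ Finset.Ico s (s + k), ξ i ω :=
  (Finset.sum_range_add_sum_Ico _ (Nat.le_add_right s k)).symm

theorem dependsOnlyOn_range_of_walk {B : Set Ω} {t : ℕ}
    (h : ∀ ω ω', (∀ u ≤ t, walk ξ u ω = walk ξ u ω') → ω ∈ B → ω' ∈ B) :
    DependsOnlyOn ξ (Finset.range t) B := by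
  refine fun ω ω' hξ => h ω ω' fun u hu => Finset.sum_congr rfl fun i hi => hξ i ?_
  simp only [Finset.mem_range] at hi ⊢
  omega

theorem mem_returnsWithin_iff {K s : ℕ} {g : G} {ω : Ω} (h : walk ξ s ω = g) :
    ω ∈ returnsWithin ξ K s ↔ ω ∈ returnsFrom ξ K s g := by
  simp only [returnsWithin, returnsFrom, Set.mem_ofPred_eq, walk_add, h]

theorem returnsWithin_inter_walk_eq (K s : ℕ) (g : G) :
    returnsWithin ξ K s ∩ {ω | walk ξ s ω = g} = returnsFrom ξ K s g ∩ {ω | walk ξ s ω = g} :=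
  Set.ext fun _ => and_congr_left mem_returnsWithin_iff

theorem dependsOnlyOn_returnsFrom (K s : ℕ) (g : G) :
    DependsOnlyOn ξ (Finset.Ico s (s + K)) (returnsFrom ξ K s g) := by
  rintro ω ω' hξ ⟨k, hk, hk0⟩
  refine ⟨k, hk, ?_⟩
  rwa [Finset.sum_congr rfl fun i hi => hξ i ?_] at hk0
  simp only [Finset.mem_Ico] at hi ⊢
  omega

section HitAvoidingZero

variable {p : G → Prop} {K m : ℕ}

theorem dependsOnlyOn_hitAvoidingZero (j t : ℕ) :
    DependsOnlyOn ξ (Finset.range t) (hitAvoidingZero ξ p K m j t) :=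
  dependsOnlyOn_range_of_walk fun ω ω' h ⟨hhit, hne⟩ =>
    ⟨hhit.congr fun u hu => by simp only [Set.mem_ofPred_eq, h u hu],
      fun u hmu hut => h u hut ▸ hne u hmu hut⟩

theorem pairwise_disjoint_hitAvoidingZero (j : ℕ) :
    Pairwise (Function.onFun Disjoint (hitAvoidingZero ξ p K m j)) :=
  fun _ _ htt' => Set.disjoint_left.2 fun _ h h' => htt' (h.1.unique h'.1)

theorem iUnion_hitAvoidingZero_succ_subset (j : ℕ) :
    ⋃ t, hitAvoidingZero ξ p K m (j + 1) t ⊆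
      ⋃ s, hitAvoidingZero ξ p K m j s \ returnsWithin ξ K s := by
  simp only [Set.iUnion_subset_iff]
  rintro t ω ⟨⟨s, hs, hst⟩, hne⟩
  have hms := hs.mem_and_le.2
  have hst := hst.1.2
  refine Set.mem_iUnion.2 ⟨s, ⟨hs, fun u hmu hus => hne u hmu (by omega)⟩, ?_⟩
  rintro ⟨k, hk, hk0⟩
  exact hne (s + k) (by omega) (by omega) hk0

theorem iUnion_hitAvoidingZero_supset {ω : Ω} (hp : {t | p (walk ξ t ω)}.Infinite)
    (hne : ∀ u, m ≤ u → walk ξ u ω ≠ 0) (j : ℕ) : ω ∈ ⋃ t, hitAvoidingZero ξ p K m j t :=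
  have ⟨t, ht⟩ := IsSparseHit.exists_of_infinite hp j
  Set.mem_iUnion.2 ⟨t, ht, fun u hmu _ => hne u hmu⟩

end HitAvoidingZero

variable [MeasurableSpace Ω] [MeasurableSpace G] [Countable G] [MeasurableSingletonClass G]
  {μ : Measure Ω} {p : G → Prop} {K m : ℕ} {δ : ENNReal}

theorem measure_diff_returnsWithin_le (hindep : iIndepFun ξ μ) (hξ : ∀ i, Measurable (ξ i))
    {s : ℕ} (hbound : ∀ g, p g → δ * μ {ω | walk ξ s ω = g} ≤
      μ (returnsWithin ξ K s ∩ {ω | walk ξ s ω = g}))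
    {B : Set Ω} (hB : DependsOnlyOn ξ (Finset.range s) B) (hBp : ∀ ω ∈ B, p (walk ξ s ω)) :
    μ (B \ returnsWithin ξ K s) ≤ (1 - δ) * μ B := by
  have hfiber (g : G) : DependsOnlyOn ξ (Finset.range s) {ω | walk ξ s ω = g} :=
    dependsOnlyOn_range_of_walk fun ω ω' h hω => (h s le_rfl).symm.trans hω
  have hdisj : Disjoint (Finset.range s) (Finset.Ico s (s + K)) := by
    simp only [Finset.disjoint_left, Finset.mem_range, Finset.mem_Ico]
    omega
  have hpart : B = ⋃ g, B ∩ {ω | walk ξ s ω = g} := by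
    ext ω; simp
  have hfiber_le (g : G) : μ ((B ∩ {ω | walk ξ s ω = g}) \ returnsWithin ξ K s) ≤
      (1 - δ) * μ (B ∩ {ω | walk ξ s ω = g}) := by
    by_cases hg : p g
    · have hdiff : (B ∩ {ω | walk ξ s ω = g}) \ returnsWithin ξ K s =
          (B ∩ {ω | walk ξ s ω = g}) \ returnsFrom ξ K s g :=
        Set.ext fun ω => and_congr_right fun hω => not_congr (mem_returnsWithin_iff hω.2)
      have hfiber_bound : δ * μ {ω | walk ξ s ω = g} ≤
          μ ({ω | walk ξ s ω = g} ∩ returnsFrom ξ K s g) := by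
        rw [Set.inter_comm, ← returnsWithin_inter_walk_eq]
        exact hbound g hg
      rw [hdiff]
      exact (hB.inter (hfiber g)).measure_diff_le hindep hξ hdisj (hfiber g)
        (dependsOnlyOn_returnsFrom K s g) Set.inter_subset_right hfiber_bound
    · have : B ∩ {ω | walk ξ s ω = g} = ∅ :=
        Set.eq_empty_of_forall_notMem fun ω ⟨hω, hωg⟩ => hg (hωg ▸ hBp ω hω)
      simp [this]
  calc μ (B \ returnsWithin ξ K s)
      = μ (⋃ g, (B ∩ {ω | walk ξ s ω = g}) \ returnsWithin ξ K s) := by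
        rw [← Set.iUnion_sdiff, ← hpart]
    _ ≤ ∑' g, μ ((B ∩ {ω | walk ξ s ω = g}) \ returnsWithin ξ K s) := measure_iUnion_le _
    _ ≤ ∑' g, (1 - δ) * μ (B ∩ {ω | walk ξ s ω = g}) := ENNReal.tsum_le_tsum hfiber_le
    _ = (1 - δ) * μ B := by
        rw [ENNReal.tsum_mul_left, ← measure_iUnion, ← hpart]
        · exact fun g g' hgg' => Set.disjoint_left.2 fun ω h h' => hgg' (h.2.symm.trans h'.2)
        · exact fun g => (hB.inter (hfiber g)).measurableSet hξ

theorem measure_iUnion_hitAvoidingZero_le (hindep : iIndepFun ξ μ) (hξ : ∀ i, Measurable (ξ i))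
    (hbound : ∀ t g, p g → δ * μ {ω | walk ξ t ω = g} ≤
      μ (returnsWithin ξ K t ∩ {ω | walk ξ t ω = g})) (j : ℕ) :
    μ (⋃ t, hitAvoidingZero ξ p K m j t) ≤ (1 - δ) ^ j := by
  have := hindep.isProbabilityMeasure
  induction j with
  | zero => simpa using prob_le_one
  | succ j ih =>
    calc μ (⋃ t, hitAvoidingZero ξ p K m (j + 1) t)
        ≤ μ (⋃ s, hitAvoidingZero ξ p K m j s \ returnsWithin ξ K s) :=
          measure_mono (iUnion_hitAvoidingZero_succ_subset j)
      _ ≤ ∑' s, μ (hitAvoidingZero ξ p K m j s \ returnsWithin ξ K s) := measure_iUnion_le _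
      _ ≤ ∑' s, (1 - δ) * μ (hitAvoidingZero ξ p K m j s) :=
          ENNReal.tsum_le_tsum fun s => measure_diff_returnsWithin_le hindep hξ (hbound s)
            (dependsOnlyOn_hitAvoidingZero j s) fun _ hω => hω.1.mem_and_le.1
      _ = (1 - δ) * μ (⋃ t, hitAvoidingZero ξ p K m j t) := by
          rw [ENNReal.tsum_mul_left, measure_iUnion (pairwise_disjoint_hitAvoidingZero j)
            fun t => (dependsOnlyOn_hitAvoidingZero j t).measurableSet hξ]
      _ ≤ (1 - δ) ^ (j + 1) := by
          rw [pow_succ']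
          gcongr

theorem ae_infinite_walk_eq_zero (hindep : iIndepFun ξ μ) (hξ : ∀ i, Measurable (ξ i))
    (hδ : δ ≠ 0) (hbound : ∀ t g, p g → δ * μ {ω | walk ξ t ω = g} ≤
      μ (returnsWithin ξ K t ∩ {ω | walk ξ t ω = g}))
    (hp : ∀ᵐ ω ∂μ, {t | p (walk ξ t ω)}.Infinite) :
    ∀ᵐ ω ∂μ, {t | walk ξ t ω = 0}.Infinite := by
  have hreturn (m : ℕ) : ∀ᵐ ω ∂μ, {t | p (walk ξ t ω)}.Infinite → ∃ t ≥ m, walk ξ t ω = 0 := by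
    have hdecay := ENNReal.tendsto_pow_atTop_nhds_zero_of_lt_one
      (ENNReal.sub_lt_self ENNReal.one_ne_top one_ne_zero hδ)
    have hbad : μ {ω | {t | p (walk ξ t ω)}.Infinite ∧ ∀ u, m ≤ u → walk ξ u ω ≠ 0} = 0 :=
      le_antisymm (ge_of_tendsto' hdecay fun j =>
        (measure_mono fun _ hω => iUnion_hitAvoidingZero_supset (K := K) hω.1 hω.2 j).trans
          (measure_iUnion_hitAvoidingZero_le hindep hξ hbound j)) bot_le
    filter_upwards [measure_eq_zero_iff_ae_notMem.1 hbad] with ω hω hinf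
    by_contra! hne
    exact hω ⟨hinf, hne⟩
  filter_upwards [hp, ae_all_iff.2 hreturn] with ω hinf hret
  exact Nat.frequently_atTop_iff_infinite.1 (Filter.frequently_atTop.2 fun m => hret m hinf)

end Walk

theorem walk_recurrent_of_projection_recurrent_general
    {Ω : Type*} [MeasurableSpace Ω] (μ : Measure Ω)
    (n : ℕ) (H : Type*) [AddCommGroup H] [Fintype H]
    [MeasurableSpace H] [MeasurableSingletonClass H]
    (ξ : ℕ → Ω → (Fin n → ℤ) × H) (hmeas : ∀ i, Measurable (ξ i))
    (hindep : iIndepFun ξ μ)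
    (X : ℕ → Ω → (Fin n → ℤ) × H)
    (hX : ∀ k ω, X k ω = ∑ i ∈ Finset.range k, ξ i ω)
    (hproj : ∀ᵐ ω ∂μ, {t : ℕ | (X t ω).1 = 0}.Infinite)
    (K : ℕ) (δ : ENNReal) (hδ : 0 < δ)
    (hbound : ∀ (t : ℕ) (g : (Fin n → ℤ) × H), g.1 = 0 →
      δ * μ {ω | X t ω = g} ≤
        μ ({ω | ∃ k ≤ K, X (t + k) ω = 0} ∩ {ω | X t ω = g})) :
    ∀ᵐ ω ∂μ, {t : ℕ | X t ω = 0}.Infinite := by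
  obtain rfl : X = walk ξ := funext fun k => funext (hX k)
  exact ae_infinite_walk_eq_zero hindep hmeas hδ.ne' hbound hproj

/-- Let `G = ℤⁿ × H` with `H` a finite abelian group, and let `X` be a homogeneous random
walk on `G` (i.i.d. steps supported on a finite set `S`) started at `0`. If the projected
walk on `ℤⁿ` returns to `0` infinitely often almost surely, and there are `K ∈ ℕ`,
`δ > 0` such that whenever the projection of `X_t` is `0`, the conditional probability
that `X_{t+k} = 0` for some `0 ≤ k ≤ K` is at least `δ`, then `X` returns to `0`
infinitely often almost surely. -/
theorem walk_recurrent_of_projection_recurrent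
    {Ω : Type*} [MeasurableSpace Ω] (μ : Measure Ω) [IsProbabilityMeasure μ]
    (n : ℕ) (H : Type*) [AddCommGroup H] [Fintype H]
    [MeasurableSpace H] [MeasurableSingletonClass H]
    (S : Finset ((Fin n → ℤ) × H))
    (ξ : ℕ → Ω → (Fin n → ℤ) × H) (hmeas : ∀ i, Measurable (ξ i))
    (hindep : iIndepFun ξ μ)
    (hident : ∀ i j : ℕ, Measure.map (ξ i) μ = Measure.map (ξ j) μ)
    (hsupp : ∀ i, ∀ᵐ ω ∂μ, ξ i ω ∈ S)
    (X : ℕ → Ω → (Fin n → ℤ) × H)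
    (hX : ∀ k ω, X k ω = ∑ i ∈ Finset.range k, ξ i ω)
    (hproj : ∀ᵐ ω ∂μ, {t : ℕ | (X t ω).1 = 0}.Infinite)
    (K : ℕ) (δ : ENNReal) (hδ : 0 < δ)
    (hbound : ∀ (t : ℕ) (g : (Fin n → ℤ) × H), g.1 = 0 →
      δ * μ {ω | X t ω = g} ≤
        μ ({ω | ∃ k ≤ K, X (t + k) ω = 0} ∩ {ω | X t ω = g})) :
    ∀ᵐ ω ∂μ, {t : ℕ | X t ω = 0}.Infinite :=
  walk_recurrent_of_projection_recurrent_general μ n H ξ hmeas hindep X hX hproj K δ hδ hbound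
end
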